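/- arXiv:2507.22200 — 2 statements merged into one kernel-verified Lean document; each statement's English description precedes it below -/
import Mathlib

section
/- Let H be a real symmetric n×n matrix strictly supported on G, let λ ∈ ℝ and ψ ∈ ℝ^V satisfy Hψ = λψ with dim ker(H − λI) = 1 and ψ_r ≠ 0 for every vertex r. Then 0 ≤ ν(ψ,H) − n_-(H − λI) ≤ β; that is, writing k − 1 = n_-(H − λI), the nodal count ν(ψ,H) lies between k − 1 and k − 1 + β. -/
open Matrix

/-- A finite simple graph with a chosen orientation of each edge:
`E` is the edge index type, each edge `e` goes from `src e` to `tgt e`. -/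
structure OrientedGraph (V E : Type*) where
  src : E → V
  tgt : E → V
  loopless : ∀ e, src e ≠ tgt e
  edgeInj : ∀ e f, (src e = src f ∧ tgt e = tgt f) ∨ (src e = tgt f ∧ tgt e = src f) → e = f

/-- The underlying simple graph: `r` and `s` are adjacent iff some oriented edge joins them. -/
def OrientedGraph.toSimpleGraph {V E : Type*} (G : OrientedGraph V E) : SimpleGraph V where
  Adj r s := ∃ e, (G.src e = r ∧ G.tgt e = s) ∨ (G.src e = s ∧ G.tgt e = r)
  symm := by
    constructor
    intro r s h
    obtain ⟨e, h⟩ := h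
    exact ⟨e, h.symm⟩
  loopless := by
    constructor
    intro r h
    obtain ⟨e, h⟩ := h
    rcases h with ⟨h1, h2⟩ | ⟨h1, h2⟩ <;> exact G.loopless e (h1.trans h2.symm)

/-- `H` is strictly supported on `G`: off-diagonal entries are nonzero exactly on edges. -/
def OrientedGraph.StrictSupport {V E : Type*} (G : OrientedGraph V E)
    (H : Matrix V V ℝ) : Prop :=
  ∀ r s, r ≠ s → (H r s ≠ 0 ↔ G.toSimpleGraph.Adj r s)

/-- `H` is supported on `G`: off-diagonal nonzero entries occur only on edges. -/
def OrientedGraph.Support {V E : Type*} (G : OrientedGraph V E)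
    (H : Matrix V V ℝ) : Prop :=
  ∀ r s, r ≠ s → H r s ≠ 0 → G.toSimpleGraph.Adj r s

/-- The coboundary map `d : ℝ^V → ℝ^E`, `(dθ)_{(r→s)} = θ_s - θ_r`, as an `E × V` matrix. -/
def OrientedGraph.cob {V E : Type*} [DecidableEq V] (G : OrientedGraph V E) :
    Matrix E V ℝ :=
  Matrix.of fun e v => (if G.tgt e = v then (1 : ℝ) else 0) - (if G.src e = v then (1 : ℝ) else 0)

/-- The cycle space `Z = ker dᵀ ⊆ ℝ^E`. -/
noncomputable def OrientedGraph.cycleSpace {V E : Type*} [Fintype V] [Fintype E]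
    [DecidableEq V] (G : OrientedGraph V E) : Submodule ℝ (E → ℝ) :=
  LinearMap.ker (G.cob)ᵀ.mulVecLin

/-- The diagonal matrix `Φ` on `ℝ^E` with entries `Φ_{(r→s)} = -ψ_r H_{rs} ψ_s`. -/
noncomputable def PhiMat {V E : Type*} [DecidableEq E] (G : OrientedGraph V E)
    (H : Matrix V V ℝ) (ψ : V → ℝ) : Matrix E E ℝ :=
  Matrix.diagonal fun e => -(ψ (G.src e) * H (G.src e) (G.tgt e) * ψ (G.tgt e))

/-- The nodal count `ν(ψ,H) = #{(r→s) ∈ E : ψ_r H_{rs} ψ_s > 0}`. -/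
noncomputable def nodalCount {V E : Type*} (G : OrientedGraph V E)
    (H : Matrix V V ℝ) (ψ : V → ℝ) : ℕ :=
  Nat.card {e : E // 0 < ψ (G.src e) * H (G.src e) (G.tgt e) * ψ (G.tgt e)}

/-- `C` is a frame for the cycle space: its columns form a basis of `Z`. -/
def IsFrame {V E : Type*} [Fintype V] [Fintype E] [DecidableEq V]
    (G : OrientedGraph V E) {β : ℕ} (C : Matrix E (Fin β) ℝ) : Prop :=
  LinearMap.ker C.mulVecLin = ⊥ ∧ LinearMap.range C.mulVecLin = G.cycleSpace

/-- `n₋(A)`: the number of negative eigenvalues (with multiplicity) of a hermitian matrix. -/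
noncomputable def negEig {𝕜 : Type*} [RCLike 𝕜] {m : Type*} [Fintype m] [DecidableEq m]
    (A : Matrix m m 𝕜) : ℕ :=
  if h : A.IsHermitian then Nat.card {i // h.eigenvalues i < 0} else 0

/-- `n₊(A)`: the number of positive eigenvalues (with multiplicity) of a hermitian matrix. -/
noncomputable def posEig {𝕜 : Type*} [RCLike 𝕜] {m : Type*} [Fintype m] [DecidableEq m]
    (A : Matrix m m 𝕜) : ℕ :=
  if h : A.IsHermitian then Nat.card {i // 0 < h.eigenvalues i} else 0

/-- `n₀(A)`: the number of zero eigenvalues of a hermitian matrix, i.e. `dim ker A`. -/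
noncomputable def zeroEig {𝕜 : Type*} [RCLike 𝕜] {m : Type*} [Fintype m] [DecidableEq m]
    (A : Matrix m m 𝕜) : ℕ :=
  Module.finrank 𝕜 (LinearMap.ker A.mulVecLin)

/-- `n₋([A]_W)`: the Morse index (number of negative eigenvalues) of the compression of
a hermitian matrix `A` to the subspace `W`, i.e. the maximal dimension of a subspace of `W`
on which the hermitian form of `A` is negative definite. -/
noncomputable def negIndexOn {𝕜 : Type*} [RCLike 𝕜] {m : Type*} [Fintype m]
    (A : Matrix m m 𝕜) (W : Submodule 𝕜 (m → 𝕜)) : ℕ :=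
  sSup {k : ℕ | ∃ U : Submodule 𝕜 (m → 𝕜), U ≤ W ∧ Module.finrank 𝕜 U = k ∧
    ∀ x ∈ U, x ≠ 0 → RCLike.re (star x ⬝ᵥ A.mulVec x) < 0}

/-- `n₊([A]_W)`: the number of positive eigenvalues of the compression of a hermitian
matrix `A` to the subspace `W`. -/
noncomputable def posIndexOn {𝕜 : Type*} [RCLike 𝕜] {m : Type*} [Fintype m]
    (A : Matrix m m 𝕜) (W : Submodule 𝕜 (m → 𝕜)) : ℕ :=
  sSup {k : ℕ | ∃ U : Submodule 𝕜 (m → 𝕜), U ≤ W ∧ Module.finrank 𝕜 U = k ∧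
    ∀ x ∈ U, x ≠ 0 → 0 < RCLike.re (star x ⬝ᵥ A.mulVec x)}

/-- The linear functional `x ↦ v ⬝ᵥ x`. -/
noncomputable def dotLeft {𝕜 : Type*} [RCLike 𝕜] {m : Type*} [Fintype m] (v : m → 𝕜) :
    (m → 𝕜) →ₗ[𝕜] 𝕜 where
  toFun x := v ⬝ᵥ x
  map_add' x y := by simp [dotProduct_add]
  map_smul' c x := by simp [dotProduct_smul]

/-- `n₀([A]_W)`: the dimension of the kernel of the compression of `A` to `W`,
i.e. of `{x ∈ W : Ax ⊥ W}`. -/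
noncomputable def zeroIndexOn {𝕜 : Type*} [RCLike 𝕜] {m : Type*} [Fintype m]
    (A : Matrix m m 𝕜) (W : Submodule 𝕜 (m → 𝕜)) : ℕ :=
  Module.finrank 𝕜
    ↥(W ⊓ ⨅ y : W, LinearMap.ker ((dotLeft (star (y : m → 𝕜))).comp A.mulVecLin))

/-- Extension of `α ∈ ℝ^E` to an antisymmetric function on pairs of vertices:
`α_{rs} = α_e` if `e = (r→s) ∈ E`, `α_{rs} = -α_e` if `e = (s→r) ∈ E`, and `0` otherwise. -/
noncomputable def alphaExt {V E : Type*} [Fintype E] [DecidableEq V]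
    (G : OrientedGraph V E) (α : E → ℝ) (r s : V) : ℝ :=
  ∑ e : E, ((if G.src e = r ∧ G.tgt e = s then α e else 0) -
            (if G.src e = s ∧ G.tgt e = r then α e else 0))

/-- The phase-perturbed matrix `H_α` with `(H_α)_{rs} = e^{iα_{rs}} H_{rs}` for `r ≠ s`. -/
noncomputable def phaseMat {V E : Type*} [Fintype E] [DecidableEq V]
    (G : OrientedGraph V E) (H : Matrix V V ℝ) (α : E → ℝ) : Matrix V V ℂ :=
  Matrix.of fun r s =>
    if r = s then (H r r : ℂ)
    else Complex.exp (Complex.I * (alphaExt G α r s : ℂ)) * (H r s : ℂ)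

/-!
Write `A = H - λ I` and let `d : ℝ^V → ℝ^E` be the coboundary of `G`. Because `A ψ = 0`, the
matrix `diag ψ · A · diag ψ` has zero row sums, so it is determined by its off-diagonal entries
`ψ_r H_rs ψ_s`; these are also those of `dᵀ Φ d`, where `Φ` is diagonal with entries
`-ψ_r H_rs ψ_s`. Hence `A` and `Φ` are related by congruences in both directions, and the number
of negative entries of `Φ` is the nodal count. A congruence cannot raise the negative index, which
gives `n₋(A) ≤ n₋(Φ) = ν`. Conversely, restricting the form of `Φ` to the range of `d` loses at most
its codimension `|E| - rank d = β` (for connected `G`, `ker d` is the constants) negative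
directions, so `ν ≤ n₋(dᵀ Φ d) + β ≤ n₋(A) + β`.
-/
open Matrix Module

lemma Matrix.IsHermitian.transpose_mul_mul {l m : Type*} [Fintype l] {A : Matrix l l ℝ}
    (hA : A.IsHermitian) (M : Matrix l m ℝ) : (Mᵀ * A * M).IsHermitian := by
  simpa using isHermitian_conjTranspose_mul_mul M hA

section NegativeIndex

variable {l m : Type*} [Fintype l] [Fintype m]

def NegDefOn (A : Matrix m m ℝ) (U : Submodule ℝ (m → ℝ)) : Prop :=
  ∀ x ∈ U, x ≠ 0 → x ⬝ᵥ A *ᵥ x < 0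

lemma dotProduct_transpose_mul_mul_mulVec (A : Matrix l l ℝ) (M : Matrix l m ℝ) (x : m → ℝ) :
    x ⬝ᵥ (Mᵀ * A * M) *ᵥ x = (M *ᵥ x) ⬝ᵥ A *ᵥ (M *ᵥ x) := by
  rw [← mulVec_mulVec, ← mulVec_mulVec, dotProduct_mulVec, vecMul_transpose]

lemma dotProduct_diagonal_mulVec [DecidableEq m] (φ x : m → ℝ) :
    x ⬝ᵥ diagonal φ *ᵥ x = ∑ i, φ i * x i ^ 2 := by
  simp only [dotProduct, mulVec_diagonal]
  exact Finset.sum_congr rfl fun i _ => by ring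

namespace NegDefOn

variable {A : Matrix l l ℝ} {M : Matrix l m ℝ} {U : Submodule ℝ (m → ℝ)}

lemma map_mulVecLin (hU : NegDefOn (Mᵀ * A * M) U) : NegDefOn A (U.map M.mulVecLin) := by
  rintro _ ⟨x, hx, rfl⟩ hMx
  have hx0 : x ≠ 0 := by rintro rfl; simp at hMx
  simpa only [Matrix.mulVecLin_apply, dotProduct_transpose_mul_mul_mulVec] using hU x hx hx0

lemma finrank_map_mulVecLin (hU : NegDefOn (Mᵀ * A * M) U) :
    finrank ℝ (U.map M.mulVecLin) = finrank ℝ U := by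
  have hinj : Function.Injective (M.mulVecLin.domRestrict U) := by
    rw [← LinearMap.ker_eq_bot, LinearMap.ker_eq_bot']
    intro x hMx
    by_contra hx0
    have hneg := hU x x.2 (by simpa using hx0)
    have hMx' : M *ᵥ (x : m → ℝ) = 0 := by simpa using hMx
    rw [dotProduct_transpose_mul_mul_mulVec, hMx'] at hneg
    simp at hneg
  rw [← LinearMap.range_domRestrict, LinearMap.finrank_range_of_inj hinj]

lemma finrank_le_card_diagonal [DecidableEq l] {φ : l → ℝ} {U : Submodule ℝ (l → ℝ)}
    (hU : NegDefOn (diagonal φ) U) : finrank ℝ U ≤ Nat.card {i // φ i < 0} := by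
  set f : (l → ℝ) →ₗ[ℝ] ({i // φ i < 0} → ℝ) := LinearMap.funLeft ℝ ℝ Subtype.val
  -- a vector of `U` vanishing on the negative coordinates has nonnegative form, hence is zero
  have hinj : Function.Injective (f.domRestrict U) := by
    rw [← LinearMap.ker_eq_bot, LinearMap.ker_eq_bot']
    intro x hfx
    by_contra hx0
    have hneg := hU x x.2 (by simpa using hx0)
    rw [dotProduct_diagonal_mulVec] at hneg
    refine hneg.not_ge (Finset.sum_nonneg fun i _ => ?_)
    by_cases hi : φ i < 0
    · have hxi : (x : l → ℝ) i = 0 := by simpa [f] using congrFun hfx ⟨i, hi⟩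
      simp [hxi]
    · exact mul_nonneg (not_lt.1 hi) (sq_nonneg _)
  have := (LinearMap.range (f.domRestrict U)).finrank_le
  rwa [LinearMap.finrank_range_of_inj hinj, finrank_pi, ← Nat.card_eq_fintype_card] at this

end NegDefOn

lemma exists_negDefOn_diagonal [DecidableEq m] (φ : m → ℝ) :
    ∃ U : Submodule ℝ (m → ℝ), finrank ℝ U = Nat.card {i // φ i < 0} ∧ NegDefOn (diagonal φ) U := by
  set f : (m → ℝ) →ₗ[ℝ] ({i // ¬ φ i < 0} → ℝ) := LinearMap.funLeft ℝ ℝ Subtype.val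
  refine ⟨LinearMap.ker f, ?_, ?_⟩
  · have hsurj : LinearMap.range f = ⊤ := LinearMap.range_eq_top.2 <|
      LinearMap.funLeft_surjective_of_injective ℝ ℝ _ Subtype.val_injective
    have h := LinearMap.finrank_range_add_finrank_ker f
    rw [hsurj, finrank_top, finrank_pi, finrank_pi, Fintype.card_subtype_compl] at h
    have hle := Fintype.card_subtype_le (fun i => φ i < 0)
    rw [Nat.card_eq_fintype_card]
    omega
  · intro x hx hx0
    have hzero : ∀ i, ¬ φ i < 0 → x i = 0 := fun i hi => congrFun (LinearMap.mem_ker.1 hx) ⟨i, hi⟩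
    obtain ⟨j, hj⟩ := Function.ne_iff.1 hx0
    have hφj : φ j < 0 := by_contra fun h => hj (hzero j h)
    rw [dotProduct_diagonal_mulVec]
    refine Finset.sum_neg' (fun i _ => ?_) ⟨j, Finset.mem_univ j, ?_⟩
    · by_cases hi : φ i < 0
      · exact mul_nonpos_of_nonpos_of_nonneg hi.le (sq_nonneg _)
      · simp [hzero i hi]
    · exact mul_neg_of_neg_of_pos hφj (pow_pos (abs_pos.2 hj) 2 |>.trans_eq (sq_abs _))

end NegativeIndex

section NegEig

variable {l m : Type*} [Fintype l] [Fintype m] [DecidableEq m]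

lemma Matrix.IsHermitian.exists_transpose_mul_mul_eq_diagonal {A : Matrix m m ℝ}
    (hA : A.IsHermitian) :
    ∃ S : Matrix m m ℝ, Sᵀ * A * S = diagonal hA.eigenvalues ∧
      S * diagonal hA.eigenvalues * Sᵀ = A := by
  refine ⟨hA.eigenvectorUnitary, ?_, ?_⟩
  · simpa [Unitary.conjStarAlgAut_star_apply, RCLike.ofReal_real_eq_id, star_eq_conjTranspose]
      using hA.conjStarAlgAut_star_eigenvectorUnitary
  · simpa [Unitary.conjStarAlgAut_apply, RCLike.ofReal_real_eq_id, star_eq_conjTranspose]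
      using hA.spectral_theorem.symm

lemma NegDefOn.finrank_le_negEig {A : Matrix m m ℝ} (hA : A.IsHermitian)
    {U : Submodule ℝ (m → ℝ)} (hU : NegDefOn A U) : finrank ℝ U ≤ negEig A := by
  obtain ⟨S, -, hS⟩ := hA.exists_transpose_mul_mul_eq_diagonal
  have hU' : NegDefOn (Sᵀᵀ * diagonal hA.eigenvalues * Sᵀ) U := by rwa [transpose_transpose, hS]
  rw [negEig, dif_pos hA, ← hU'.finrank_map_mulVecLin]
  exact hU'.map_mulVecLin.finrank_le_card_diagonal

lemma exists_negDefOn_finrank_eq_negEig {A : Matrix m m ℝ} (hA : A.IsHermitian) :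
    ∃ U : Submodule ℝ (m → ℝ), finrank ℝ U = negEig A ∧ NegDefOn A U := by
  obtain ⟨S, hS, -⟩ := hA.exists_transpose_mul_mul_eq_diagonal
  obtain ⟨U, hUdim, hU⟩ := exists_negDefOn_diagonal hA.eigenvalues
  rw [← hS] at hU
  exact ⟨_, by rw [hU.finrank_map_mulVecLin, hUdim, negEig, dif_pos hA], hU.map_mulVecLin⟩

lemma negEig_diagonal (φ : m → ℝ) : negEig (diagonal φ) = Nat.card {i // φ i < 0} := by
  apply le_antisymm
  · obtain ⟨U, hUdim, hU⟩ := exists_negDefOn_finrank_eq_negEig (isHermitian_diagonal φ)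
    exact hUdim ▸ hU.finrank_le_card_diagonal
  · obtain ⟨U, hUdim, hU⟩ := exists_negDefOn_diagonal φ
    exact hUdim ▸ hU.finrank_le_negEig (isHermitian_diagonal φ)

variable [DecidableEq l] {A : Matrix l l ℝ}

lemma negEig_transpose_mul_mul_le (hA : A.IsHermitian) (M : Matrix l m ℝ) :
    negEig (Mᵀ * A * M) ≤ negEig A := by
  obtain ⟨U, hUdim, hU⟩ := exists_negDefOn_finrank_eq_negEig (hA.transpose_mul_mul M)
  rw [← hUdim, ← hU.finrank_map_mulVecLin]
  exact hU.map_mulVecLin.finrank_le_negEig hA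

lemma negEig_add_rank_le (hA : A.IsHermitian) (M : Matrix l m ℝ) :
    negEig A + M.rank ≤ negEig (Mᵀ * A * M) + Fintype.card l := by
  obtain ⟨U, hUdim, hU⟩ := exists_negDefOn_finrank_eq_negEig hA
  set W := LinearMap.range M.mulVecLin
  obtain ⟨C, hC⟩ := Submodule.exists_isCompl (LinearMap.ker M.mulVecLin)
  set K := C ⊓ (U ⊓ W).comap M.mulVecLin
  -- `M` maps `K` onto `U ⊓ W`, injectively because `K` meets `ker M` trivially
  have hmap : K.map M.mulVecLin = U ⊓ W := by
    refine le_antisymm (Submodule.map_le_iff_le_comap.2 inf_le_right) fun y hy => ?_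
    obtain ⟨x, rfl⟩ := hy.2
    obtain ⟨k, hk, c, hc, rfl⟩ :=
      Submodule.mem_sup.1 (hC.sup_eq_top ▸ Submodule.mem_top : x ∈ _ ⊔ C)
    have hMc : M.mulVecLin (k + c) = M.mulVecLin c := by
      rw [map_add, LinearMap.mem_ker.1 hk, zero_add]
    refine ⟨c, ⟨hc, ?_⟩, hMc.symm⟩
    change M.mulVecLin c ∈ U ⊓ W
    rwa [← hMc]
  have hK : NegDefOn (Mᵀ * A * M) K := by
    intro x hx hx0
    rw [dotProduct_transpose_mul_mul_mulVec]
    refine hU _ hx.2.1 fun hMx => hx0 ?_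
    have hxC : x ∈ LinearMap.ker M.mulVecLin ⊓ C := ⟨hMx, hx.1⟩
    rwa [hC.inf_eq_bot, Submodule.mem_bot] at hxC
  have hUW : finrank ℝ ↥(U ⊓ W) ≤ negEig (Mᵀ * A * M) :=
    hmap ▸ (Submodule.finrank_map_le _ _).trans (hK.finrank_le_negEig (hA.transpose_mul_mul M))
  have hsup : finrank ℝ ↥(U ⊔ W) ≤ Fintype.card l := by
    simpa using (U ⊔ W).finrank_le
  have := Submodule.finrank_sup_add_finrank_inf_eq U W
  change negEig A + finrank ℝ W ≤ _
  omega

end NegEig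

lemma Matrix.ext_of_offDiag_of_mulVec_one_eq_zero {n : Type*} [Fintype n] {M N : Matrix n n ℝ}
    (hM : M *ᵥ 1 = 0) (hN : N *ᵥ 1 = 0) (h : ∀ r s, r ≠ s → M r s = N r s) : M = N := by
  classical
  ext r s
  obtain rfl | hrs := eq_or_ne r s
  · have hrow : ∀ P : Matrix n n ℝ, P *ᵥ 1 = 0 → P r r = -∑ t ∈ Finset.univ.erase r, P r t := by
      intro P hP
      have := congrFun hP r
      rw [mulVec, dotProduct, ← Finset.add_sum_erase _ _ (Finset.mem_univ r)] at this
      simp only [Pi.one_apply, mul_one, Pi.zero_apply] at this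
      linarith
    rw [hrow M hM, hrow N hN,
      Finset.sum_congr rfl fun t ht => h r t (Finset.ne_of_mem_erase ht).symm]
  · exact h r s hrs

lemma eq_transpose_mul_mul_of_diagonal_mul_mul_eq {n l : Type*} [Fintype n] [DecidableEq n]
    [Fintype l] {A : Matrix n n ℝ} {B : Matrix l l ℝ} {M : Matrix l n ℝ} {ψ : n → ℝ}
    (hψ : ∀ r, ψ r ≠ 0) (h : diagonal ψ * A * diagonal ψ = Mᵀ * B * M) :
    A = (M * diagonal ψ⁻¹)ᵀ * B * (M * diagonal ψ⁻¹) := by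
  have hinv : diagonal ψ⁻¹ * diagonal ψ = 1 := by
    rw [diagonal_mul_diagonal, ← diagonal_one]
    exact congrArg diagonal (funext fun r => inv_mul_cancel₀ (hψ r))
  have hinv' : diagonal ψ * diagonal ψ⁻¹ = 1 := by
    rw [diagonal_mul_diagonal, ← diagonal_one]
    exact congrArg diagonal (funext fun r => mul_inv_cancel₀ (hψ r))
  calc A = diagonal ψ⁻¹ * (diagonal ψ * A * diagonal ψ) * diagonal ψ⁻¹ := by
        simp only [← Matrix.mul_assoc, hinv, Matrix.one_mul]
        rw [Matrix.mul_assoc, hinv', Matrix.mul_one]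
    _ = (M * diagonal ψ⁻¹)ᵀ * B * (M * diagonal ψ⁻¹) := by
        rw [h, transpose_mul, diagonal_transpose]
        simp only [Matrix.mul_assoc]

namespace OrientedGraph

variable {V E : Type*} (G : OrientedGraph V E)

lemma eq_of_joins {e f : E} {r s : V}
    (he : (G.src e = r ∧ G.tgt e = s) ∨ (G.src e = s ∧ G.tgt e = r))
    (hf : (G.src f = r ∧ G.tgt f = s) ∨ (G.src f = s ∧ G.tgt f = r)) : e = f :=
  G.edgeInj e f (by grind)

lemma nodalCount_eq_negEig_phiMat [Fintype E] [DecidableEq E] (H : Matrix V V ℝ) (ψ : V → ℝ) :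
    nodalCount G H ψ = negEig (PhiMat G H ψ) := by
  rw [PhiMat, negEig_diagonal]
  exact Nat.card_congr (Equiv.subtypeEquivRight fun e => neg_lt_zero.symm)

variable [DecidableEq V]

lemma cob_mul_cob_of_ne {r s : V} (hrs : r ≠ s) (e : E) :
    G.cob e r * G.cob e s =
      if (G.src e = r ∧ G.tgt e = s) ∨ (G.src e = s ∧ G.tgt e = r) then -1 else 0 := by
  have hloop := G.loopless e
  simp only [cob, of_apply]
  split_ifs <;> simp_all

lemma cob_transpose_mul_phiMat_mul_cob_apply_of_ne [Fintype E] [DecidableEq E]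
    {H : Matrix V V ℝ} (ψ : V → ℝ) (hsymm : H.IsSymm) (hsupp : G.StrictSupport H)
    {r s : V} (hrs : r ≠ s) : (G.cobᵀ * PhiMat G H ψ * G.cob) r s = ψ r * H r s * ψ s := by
  have hentry : (G.cobᵀ * PhiMat G H ψ * G.cob) r s = ∑ e,
      if (G.src e = r ∧ G.tgt e = s) ∨ (G.src e = s ∧ G.tgt e = r) then
        ψ (G.src e) * H (G.src e) (G.tgt e) * ψ (G.tgt e) else 0 := by
    rw [mul_apply]
    refine Finset.sum_congr rfl fun e _ => ?_
    rw [PhiMat, mul_diagonal, transpose_apply, mul_right_comm, G.cob_mul_cob_of_ne hrs]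
    split_ifs <;> ring
  rw [hentry]
  by_cases hadj : G.toSimpleGraph.Adj r s
  · obtain ⟨e, he⟩ := hadj
    rw [Finset.sum_eq_single e (fun f _ hfe => if_neg fun hf => hfe (G.eq_of_joins hf he))
      (by simp), if_pos he]
    rcases he with ⟨rfl, rfl⟩ | ⟨rfl, rfl⟩
    · rfl
    · rw [hsymm.apply]; ring
  · have hH : H r s = 0 := not_not.1 fun h => hadj ((hsupp r s hrs).1 h)
    rw [hH, Finset.sum_eq_zero fun e _ => if_neg fun he => hadj ⟨e, he⟩]
    ring

variable [Fintype V]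

lemma cob_mulVec_apply (x : V → ℝ) (e : E) : (G.cob *ᵥ x) e = x (G.tgt e) - x (G.src e) := by
  simp [cob, mulVec, dotProduct, sub_mul, Finset.sum_sub_distrib, ite_mul]

lemma cob_mulVec_one : G.cob *ᵥ 1 = 0 := by
  ext e
  simp [cob_mulVec_apply]

lemma ker_cob (hconn : G.toSimpleGraph.Connected) :
    LinearMap.ker G.cob.mulVecLin = Submodule.span ℝ {1} := by
  refine le_antisymm (fun x hx => ?_) ((Submodule.span_singleton_le_iff_mem _ _).2 G.cob_mulVec_one)
  have hreach : ∀ r s, G.toSimpleGraph.Reachable r s → x r = x s := by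
    rintro r s ⟨w⟩
    induction w with
    | nil => rfl
    | cons hadj _ ih =>
      obtain ⟨e, he⟩ := hadj
      have hxe : x (G.tgt e) = x (G.src e) :=
        sub_eq_zero.1 (by simpa [cob_mulVec_apply] using congrFun (LinearMap.mem_ker.1 hx) e)
      refine Eq.trans ?_ ih
      rcases he with ⟨rfl, rfl⟩ | ⟨rfl, rfl⟩ <;> simp [hxe]
  obtain ⟨v⟩ := hconn.nonempty
  have hx : x = x v • 1 := funext fun r => by simpa using hreach r v (hconn r v)
  exact hx ▸ Submodule.smul_mem _ _ (Submodule.mem_span_singleton_self _)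

lemma rank_cob_add_one (hconn : G.toSimpleGraph.Connected) :
    G.cob.rank + 1 = Fintype.card V := by
  have hker : finrank ℝ (LinearMap.ker G.cob.mulVecLin) = 1 := by
    rw [G.ker_cob hconn]
    obtain ⟨v⟩ := hconn.nonempty
    exact finrank_span_singleton fun h => by simpa using congrFun h v
  have := LinearMap.finrank_range_add_finrank_ker G.cob.mulVecLin
  rwa [hker, finrank_pi] at this

variable [Fintype E] [DecidableEq E] {G} {H : Matrix V V ℝ} (ψ : V → ℝ)

lemma diagonal_mul_sub_smul_one_mul_diagonal (hsymm : H.IsSymm) (hsupp : G.StrictSupport H)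
    {lam : ℝ} (heig : H *ᵥ ψ = lam • ψ) :
    diagonal ψ * (H - lam • 1) * diagonal ψ = G.cobᵀ * PhiMat G H ψ * G.cob := by
  refine ext_of_offDiag_of_mulVec_one_eq_zero ?_ ?_ fun r s hrs => ?_
  · have hψ : diagonal ψ *ᵥ 1 = ψ := funext fun r => by simp [mulVec_diagonal]
    rw [← mulVec_mulVec, ← mulVec_mulVec, hψ, sub_mulVec, heig, smul_mulVec, one_mulVec,
      sub_self, mulVec_zero]
  · simp only [← mulVec_mulVec, G.cob_mulVec_one, mulVec_zero]
  · rw [G.cob_transpose_mul_phiMat_mul_cob_apply_of_ne ψ hsymm hsupp hrs, mul_diagonal,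
      diagonal_mul, Matrix.sub_apply, Matrix.smul_apply, one_apply_ne hrs]
    ring

end OrientedGraph

theorem nodal_count_bound_general
    {V E : Type*} [Fintype V] [Fintype E] [DecidableEq V]
    (G : OrientedGraph V E) (hconn : G.toSimpleGraph.Connected)
    (H : Matrix V V ℝ) (hsymm : H.IsSymm) (hsupp : G.StrictSupport H)
    (lam : ℝ) (ψ : V → ℝ) (heig : H.mulVec ψ = lam • ψ)
    (hψ : ∀ r, ψ r ≠ 0) :
    negEig (H - lam • (1 : Matrix V V ℝ)) ≤ nodalCount G H ψ ∧
      nodalCount G H ψ ≤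
        negEig (H - lam • (1 : Matrix V V ℝ)) + (Fintype.card E + 1 - Fintype.card V) := by
  classical
  have hA : (H - lam • (1 : Matrix V V ℝ)).IsHermitian :=
    isHermitian_iff_isSymm.2 (hsymm.sub (isSymm_one.smul lam))
  have hΦ : (PhiMat G H ψ).IsHermitian := isHermitian_diagonal _
  have hkey := G.diagonal_mul_sub_smul_one_mul_diagonal ψ hsymm hsupp heig
  rw [G.nodalCount_eq_negEig_phiMat]
  constructor
  · rw [eq_transpose_mul_mul_of_diagonal_mul_mul_eq hψ hkey]
    exact negEig_transpose_mul_mul_le hΦ _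
  · have hcongr := negEig_add_rank_le hΦ G.cob
    have hmono := negEig_transpose_mul_mul_le hA (diagonal ψ)
    rw [diagonal_transpose, hkey] at hmono
    have hrank := G.rank_cob_add_one hconn
    omega

/-- the nodal bound `0 ≤ ν(ψ,H) - (k-1) ≤ β` with `β = |E| - |V| + 1`. -/
theorem nodal_count_bound
    {V E : Type*} [Fintype V] [Fintype E] [DecidableEq V] [DecidableEq E]
    (G : OrientedGraph V E) (hconn : G.toSimpleGraph.Connected)
    (H : Matrix V V ℝ) (hsymm : H.IsSymm) (hsupp : G.StrictSupport H)
    (lam : ℝ) (ψ : V → ℝ) (heig : H.mulVec ψ = lam • ψ)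
    (hker : Module.finrank ℝ (LinearMap.ker (H - lam • (1 : Matrix V V ℝ)).mulVecLin) = 1)
    (hψ : ∀ r, ψ r ≠ 0) :
    negEig (H - lam • (1 : Matrix V V ℝ)) ≤ nodalCount G H ψ ∧
      nodalCount G H ψ ≤
        negEig (H - lam • (1 : Matrix V V ℝ)) + (Fintype.card E + 1 - Fintype.card V) :=
  nodal_count_bound_general G hconn H hsymm hsupp lam ψ heig hψ
end

section
/- Let H be a real symmetric n×n matrix strictly supported on the connected graph G and let ψ ∈ ℝ^V be an eigenvector of H with eigenvalue λ having no zero entries. Then n_0([Φ]_{dℝ^V}) = n_0(H − λI) − 1, where dℝ^V ⊆ ℝ^E is the image of the coboundary map d. -/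
/-! Since `H ψ = λ ψ`, the quadratic form of `Φ` on coboundaries is
`⟨dθ, Φ dη⟩ = ⟨ψθ, (H - λ) ψη⟩`, i.e. `dᵀ Φ d = D_ψ (H - λ) D_ψ` with `D_ψ` invertible.
The kernel of the compression of `Φ` to `d ℝ^V` is `d (ker dᵀ Φ d)`, and on a connected graph
`ker d` consists of the constants, so it has dimension one less than `ker (H - λ)`. -/

open Matrix

theorem Submodule.finrank_map_add_finrank_ker {K M N : Type*} [DivisionRing K]
    [AddCommGroup M] [Module K M] [AddCommGroup N] [Module K N] (f : M →ₗ[K] N)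
    (S : Submodule K M) [FiniteDimensional K S] (hker : LinearMap.ker f ≤ S) :
    Module.finrank K (S.map f) + Module.finrank K (LinearMap.ker f) = Module.finrank K S := by
  have h := (f.domRestrict S).finrank_range_add_finrank_ker
  rwa [LinearMap.range_domRestrict, LinearMap.ker_domRestrict,
    (Submodule.comapSubtypeEquivOfLe hker).finrank_eq] at h

namespace Matrix

variable {𝕜 : Type*} [RCLike 𝕜] {m n : Type*} [Fintype m] [Fintype n]

theorem mem_compression_kernel_iff (Φ : Matrix m m 𝕜) (W : Submodule 𝕜 (m → 𝕜)) (x : m → 𝕜) :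
    x ∈ W ⊓ ⨅ y : W, LinearMap.ker ((dotLeft (star (y : m → 𝕜))).comp Φ.mulVecLin) ↔
      x ∈ W ∧ ∀ y ∈ W, star y ⬝ᵥ Φ *ᵥ x = 0 := by
  simp [Submodule.mem_iInf, dotLeft]

theorem star_mulVec_dotProduct_mulVec_mulVec (Φ : Matrix m m 𝕜) (C : Matrix m n 𝕜)
    (θ η : n → 𝕜) : star (C *ᵥ θ) ⬝ᵥ Φ *ᵥ (C *ᵥ η) = star θ ⬝ᵥ (Cᴴ * Φ * C) *ᵥ η := by
  rw [star_mulVec, ← mulVec_mulVec, ← mulVec_mulVec, dotProduct_mulVec (star θ)]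

open scoped ComplexOrder in
theorem compression_kernel_range_eq_map (Φ : Matrix m m 𝕜) (C : Matrix m n 𝕜) :
    LinearMap.range C.mulVecLin ⊓ ⨅ y : LinearMap.range C.mulVecLin,
        LinearMap.ker ((dotLeft (star (y : m → 𝕜))).comp Φ.mulVecLin) =
      (LinearMap.ker (Cᴴ * Φ * C).mulVecLin).map C.mulVecLin := by
  ext x
  simp only [mem_compression_kernel_iff, LinearMap.mem_range, Submodule.mem_map,
    LinearMap.mem_ker, mulVecLin_apply, forall_exists_index, forall_apply_eq_imp_iff]
  constructor
  · rintro ⟨⟨η, rfl⟩, hη⟩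
    refine ⟨η, ?_, rfl⟩
    rw [← dotProduct_star_self_eq_zero, ← star_mulVec_dotProduct_mulVec_mulVec]
    exact hη _
  · rintro ⟨η, hη, rfl⟩
    exact ⟨⟨η, rfl⟩, fun θ => by rw [star_mulVec_dotProduct_mulVec_mulVec, hη, dotProduct_zero]⟩

theorem zeroIndexOn_range_add_finrank_ker (Φ : Matrix m m 𝕜) (C : Matrix m n 𝕜) :
    zeroIndexOn Φ (LinearMap.range C.mulVecLin) + Module.finrank 𝕜 (LinearMap.ker C.mulVecLin) =
      Module.finrank 𝕜 (LinearMap.ker (Cᴴ * Φ * C).mulVecLin) := by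
  rw [zeroIndexOn, compression_kernel_range_eq_map]
  refine Submodule.finrank_map_add_finrank_ker _ _ fun η hη => ?_
  rw [LinearMap.mem_ker, mulVecLin_apply] at hη ⊢
  rw [← mulVec_mulVec, hη, mulVec_zero]

theorem finrank_ker_mulVecLin_mul_mul_of_isUnit_det [DecidableEq m] [DecidableEq n]
    (P : Matrix m m 𝕜) (A : Matrix m n 𝕜) (Q : Matrix n n 𝕜) (hP : IsUnit P.det)
    (hQ : IsUnit Q.det) :
    Module.finrank 𝕜 (LinearMap.ker (P * A * Q).mulVecLin) =
      Module.finrank 𝕜 (LinearMap.ker A.mulVecLin) := by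
  have hrank : (P * A * Q).rank = A.rank := by
    rw [rank_mul_eq_left_of_isUnit_det _ _ hQ, rank_mul_eq_right_of_isUnit_det _ _ hP]
  have h₁ := (P * A * Q).mulVecLin.finrank_range_add_finrank_ker
  have h₂ := A.mulVecLin.finrank_range_add_finrank_ker
  rw [rank, rank] at hrank
  omega

end Matrix

namespace OrientedGraph

variable {V E : Type*} [Fintype V] (G : OrientedGraph V E)

theorem sum_add_swap_eq_sum_sum [Fintype E] {M : Type*} [AddCommMonoid M] (g : V → V → M)
    (hg : ∀ r s, ¬ G.toSimpleGraph.Adj r s → g r s = 0) :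
    ∑ e, (g (G.src e) (G.tgt e) + g (G.tgt e) (G.src e)) = ∑ r, ∑ s, g r s := by
  let ends : E ⊕ E → V × V := Sum.elim (fun e => (G.src e, G.tgt e)) (fun e => (G.tgt e, G.src e))
  have hends : Function.Injective ends := by
    rintro (e | e) (f | f) h <;> simp only [ends, Sum.elim_inl, Sum.elim_inr, Prod.mk.injEq] at h
    · exact congrArg _ (G.edgeInj e f (Or.inl h))
    · obtain rfl := G.edgeInj e f (Or.inr h)
      exact absurd h.1 (G.loopless e)
    · obtain rfl := G.edgeInj e f (Or.inr h.symm)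
      exact absurd h.2 (G.loopless e)
    · exact congrArg _ (G.edgeInj e f (Or.inl h.symm))
  calc ∑ e, (g (G.src e) (G.tgt e) + g (G.tgt e) (G.src e))
      = ∑ x : E ⊕ E, g (ends x).1 (ends x).2 := by
        simp [ends, Fintype.sum_sum_type, Finset.sum_add_distrib]
    _ = ∑ p : V × V, g p.1 p.2 := by
        refine Finset.sum_of_injOn ends hends.injOn (by simp [Set.MapsTo]) ?_ (fun _ _ => rfl)
        rintro ⟨r, s⟩ - hrs
        refine hg r s fun ⟨e, he⟩ => hrs ?_
        rcases he with ⟨rfl, rfl⟩ | ⟨rfl, rfl⟩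
        exacts [⟨.inl e, by simp, rfl⟩, ⟨.inr e, by simp, rfl⟩]
    _ = ∑ r, ∑ s, g r s := Fintype.sum_prod_type' _

variable [DecidableEq V]

@[simp]
theorem cob_mulVec (θ : V → ℝ) (e : E) : (G.cob *ᵥ θ) e = θ (G.tgt e) - θ (G.src e) := by
  simp [cob, mulVec, dotProduct, sub_mul, Finset.sum_sub_distrib]

theorem cob_mulVec_eq_zero_iff {θ : V → ℝ} :
    G.cob *ᵥ θ = 0 ↔ ∀ r s, G.toSimpleGraph.Adj r s → θ r = θ s := by
  refine ⟨fun h r s ⟨e, he⟩ => ?_, fun h => funext fun e => ?_⟩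
  · have := congrFun h e
    rw [cob_mulVec, Pi.zero_apply, sub_eq_zero] at this
    rcases he with ⟨rfl, rfl⟩ | ⟨rfl, rfl⟩
    exacts [this.symm, this]
  · rw [cob_mulVec, Pi.zero_apply, h _ _ ⟨e, .inl ⟨rfl, rfl⟩⟩, sub_self]

theorem ker_cob_eq_ker_lapMatrix [DecidableRel G.toSimpleGraph.Adj] :
    LinearMap.ker G.cob.mulVecLin = LinearMap.ker (G.toSimpleGraph.lapMatrix ℝ).toLin' := by
  ext θ
  simp only [LinearMap.mem_ker, mulVecLin_apply, toLin'_apply, cob_mulVec_eq_zero_iff,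
    SimpleGraph.lapMatrix_mulVec_eq_zero_iff_forall_adj]

theorem finrank_ker_cob (hconn : G.toSimpleGraph.Connected) :
    Module.finrank ℝ (LinearMap.ker G.cob.mulVecLin) = 1 := by
  classical
  rw [ker_cob_eq_ker_lapMatrix,
    ← SimpleGraph.card_connectedComponent_eq_finrank_ker_toLin'_lapMatrix]
  exact Fintype.card_eq_one_iff.mpr ⟨G.toSimpleGraph.connectedComponentMk hconn.nonempty.some,
    fun _ => hconn.preconnected.subsingleton_connectedComponent.elim _ _⟩

theorem cob_mulVec_dotProduct_phiMat_mulVec_cob [Fintype E] [DecidableEq E] {H : Matrix V V ℝ}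
    (hsymm : H.IsSymm) (hsupp : G.Support H) {lam : ℝ} {ψ : V → ℝ} (heig : H *ᵥ ψ = lam • ψ)
    (θ η : V → ℝ) :
    G.cob *ᵥ θ ⬝ᵥ PhiMat G H ψ *ᵥ (G.cob *ᵥ η) = (ψ * θ) ⬝ᵥ (H - lam • 1) *ᵥ (ψ * η) := by
  -- Split each edge term over its two orientations; the eigen-equation then absorbs `-λ`.
  set g : V → V → ℝ := fun r s => ψ r * θ r * H r s * ψ s * (η s - η r)
  have hg : ∀ r s, ¬ G.toSimpleGraph.Adj r s → g r s = 0 := by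
    intro r s hrs
    by_cases hr : r = s
    · simp [g, hr]
    · simp [g, not_imp_comm.mp (hsupp r s hr) hrs]
  have hrow : ∀ r, ∑ s, H r s * ψ s = lam * ψ r := fun r => congrFun heig r
  calc G.cob *ᵥ θ ⬝ᵥ PhiMat G H ψ *ᵥ (G.cob *ᵥ η)
      = ∑ e, (g (G.src e) (G.tgt e) + g (G.tgt e) (G.src e)) := by
        simp only [dotProduct, PhiMat, mulVec_diagonal, cob_mulVec, g, hsymm.apply (G.src _)]
        exact Finset.sum_congr rfl fun e _ => by ring
    _ = ∑ r, ∑ s, g r s := G.sum_add_swap_eq_sum_sum g hg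
    _ = ∑ r, ψ r * θ r * (∑ s, H r s * (ψ s * η s) - lam * ψ r * η r) := by
        refine Finset.sum_congr rfl fun r _ => ?_
        rw [← hrow r, Finset.sum_mul, ← Finset.sum_sub_distrib, Finset.mul_sum]
        exact Finset.sum_congr rfl fun s _ => by simp only [g]; ring
    _ = (ψ * θ) ⬝ᵥ (H - lam • 1) *ᵥ (ψ * η) := by
        rw [sub_mulVec, smul_mulVec, one_mulVec]
        simp only [dotProduct, mulVec, Pi.sub_apply, Pi.smul_apply, Pi.mul_apply, smul_eq_mul]
        exact Finset.sum_congr rfl fun r _ => by ring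

theorem cob_transpose_mul_phiMat_mul_cob [Fintype E] [DecidableEq E] {H : Matrix V V ℝ}
    (hsymm : H.IsSymm) (hsupp : G.Support H) {lam : ℝ} {ψ : V → ℝ} (heig : H *ᵥ ψ = lam • ψ) :
    G.cobᵀ * PhiMat G H ψ * G.cob = diagonal ψ * (H - lam • 1) * diagonal ψ := by
  have hdiag : ∀ θ : V → ℝ, diagonal ψ *ᵥ θ = ψ * θ := fun θ => funext (mulVec_diagonal ψ θ)
  refine (toLinearMap₂' ℝ (S₁ := ℝ) (S₂ := ℝ)).injective (LinearMap.ext₂ fun θ η => ?_)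
  have h₁ := star_mulVec_dotProduct_mulVec_mulVec (PhiMat G H ψ) G.cob θ η
  have h₂ := star_mulVec_dotProduct_mulVec_mulVec (H - lam • 1) (diagonal ψ) θ η
  simp only [star_trivial, conjTranspose_eq_transpose_of_trivial, diagonal_transpose, hdiag,
    G.cob_mulVec_dotProduct_phiMat_mulVec_cob hsymm hsupp heig] at h₁ h₂
  simp only [toLinearMap₂'_apply', ← h₁, h₂]

end OrientedGraph

/-- `n₀([Φ]_{dℝ^V}) = n₀(H - λI) - 1`. -/
theorem zero_index_compression_coboundary
    {V E : Type*} [Fintype V] [Fintype E] [DecidableEq V] [DecidableEq E]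
    (G : OrientedGraph V E) (hconn : G.toSimpleGraph.Connected)
    (H : Matrix V V ℝ) (hsymm : H.IsSymm) (hsupp : G.StrictSupport H)
    (lam : ℝ) (ψ : V → ℝ) (heig : H.mulVec ψ = lam • ψ) (hψ : ∀ r, ψ r ≠ 0) :
    zeroIndexOn (PhiMat G H ψ) (LinearMap.range G.cob.mulVecLin) + 1 =
      zeroEig (H - lam • (1 : Matrix V V ℝ)) := by
  have hdiag : IsUnit (diagonal ψ).det := by
    rw [det_diagonal, isUnit_iff_ne_zero, Finset.prod_ne_zero_iff]
    exact fun r _ => hψ r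
  have h := (PhiMat G H ψ).zeroIndexOn_range_add_finrank_ker G.cob
  rwa [G.finrank_ker_cob hconn, conjTranspose_eq_transpose_of_trivial,
    G.cob_transpose_mul_phiMat_mul_cob hsymm (fun r s hrs => (hsupp r s hrs).1) heig,
    finrank_ker_mulVecLin_mul_mul_of_isUnit_det _ _ _ hdiag hdiag] at h
end
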